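/- arXiv:2208.01763 — 2 statements merged into one kernel-verified Lean document; each statement's English description precedes it below -/
import Mathlib

section
/- Let R be a commutative Noetherian ring, A a standard graded R-algebra, and φ: R → S a surjective ring homomorphism. Then A ⊗_R S is a standard graded S-algebra and rt_S(A ⊗_R S) ≤ rt_R(A). -/
open MvPolynomial TensorProduct

/-- The ideal generated by the elements of `Q` of total degree at most `ℓ`. -/
noncomputable def Ideal.degLE {σ R : Type*} [CommRing R] (Q : Ideal (MvPolynomial σ R)) (ℓ : ℕ) :
    Ideal (MvPolynomial σ R) :=
  Ideal.span {q | q ∈ Q ∧ q.totalDegree ≤ ℓ}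

/-- The relation type of a presentation ideal `Q`. -/
noncomputable def relTypeKer {σ R : Type*} [CommRing R] (Q : Ideal (MvPolynomial σ R)) : ℕ :=
  sInf {ℓ : ℕ | 1 ≤ ℓ ∧ Q.degLE ℓ = Q}

/-- The relation type `rt_R(A)` with respect to the degree-one generating family `f`. -/
noncomputable def relType (R : Type*) {A : Type*} [CommRing R] [CommRing A] [Algebra R A]
    {ι : Type*} (f : ι → A) : ℕ :=
  relTypeKer (RingHom.ker (MvPolynomial.aeval f : MvPolynomial ι R →ₐ[R] A))

/-! Tensoring the presentation `0 → Q → R[T] → A → 0` with `S` is right exact, so the kernel of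
`S[T] → S ⊗[R] A` is the ideal generated by the image of `Q`; reducing coefficients does not raise
total degrees, so generators of `Q` of degree `≤ ℓ` map to generators of that kernel of degree
`≤ ℓ`. Noetherianity of `R` makes `Q` finitely generated, so its relation type is attained rather
than the junk value `sInf ∅ = 0`. -/

namespace Submodule

variable {R S A : Type*} [CommSemiring R] [CommSemiring S] [CommSemiring A] [Algebra R S]
  [Algebra R A]

theorem baseChange_one : (1 : Submodule R A).baseChange S = 1 := by
  rw [one_eq_span, baseChange_span, one_eq_span]
  simp [Algebra.TensorProduct.one_def]

theorem baseChange_mul (p q : Submodule R A) :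
    (p * q).baseChange S = p.baseChange S * q.baseChange S := by
  rw [← p.span_eq, ← q.span_eq, span_mul_span, baseChange_span, baseChange_span, baseChange_span,
    span_mul_span]
  congr 1
  exact Set.image_mul (m := (Algebra.TensorProduct.includeRight : A →ₐ[R] S ⊗[R] A))

end Submodule

structure IsStandardGraded {R A : Type*} [CommSemiring R] [Semiring A] [Algebra R A]
    (𝒜 : ℕ → Submodule R A) : Prop where
  zero_eq : 𝒜 0 = 1
  succ_eq : ∀ n, 𝒜 (n + 1) = 𝒜 1 * 𝒜 n

namespace IsStandardGraded

variable {R A : Type*} [CommSemiring R] [CommSemiring A] [Algebra R A] {𝒜 : ℕ → Submodule R A}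

theorem baseChange {S : Type*} [CommSemiring S] [Algebra R S] (h : IsStandardGraded 𝒜) :
    IsStandardGraded fun n ↦ (𝒜 n).baseChange S where
  zero_eq := by rw [h.zero_eq, Submodule.baseChange_one]
  succ_eq n := by rw [h.succ_eq, Submodule.baseChange_mul]

theorem aeval_surjective [GradedAlgebra 𝒜] (h : IsStandardGraded 𝒜) {σ : Type*} {f : σ → A}
    (hf : Submodule.span R (Set.range f) = 𝒜 1) : Function.Surjective (aeval (R := R) f) := by
  have hle1 : 𝒜 1 ≤ Subalgebra.toSubmodule (Algebra.adjoin R (Set.range f)) :=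
    hf ▸ Submodule.span_le.mpr Algebra.subset_adjoin
  have hle : ∀ n, 𝒜 n ≤ Subalgebra.toSubmodule (Algebra.adjoin R (Set.range f)) := by
    intro n
    induction n with
    | zero => exact h.zero_eq ▸ Submodule.one_le.mpr (Subalgebra.one_mem _)
    | succ n ih =>
      rw [h.succ_eq, Submodule.mul_le]
      intro a ha b hb
      exact Subalgebra.mul_mem _ (hle1 ha) (ih hb)
  rw [← AlgHom.range_eq_top, ← Algebra.adjoin_range_eq_range_aeval, eq_top_iff]
  intro a _
  classical
  rw [← DirectSum.sum_support_decompose 𝒜 a]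
  exact sum_mem fun n _ ↦ hle n (DirectSum.decompose 𝒜 a n).2

end IsStandardGraded

namespace MvPolynomial

theorem totalDegree_map_le {σ R S : Type*} [CommSemiring R] [CommSemiring S] (ψ : R →+* S)
    (p : MvPolynomial σ R) : (p.map ψ).totalDegree ≤ p.totalDegree :=
  Finset.sup_mono (support_map_subset ψ p)

theorem ker_aeval_one_tmul {σ R S A : Type*} [CommRing R] [CommRing S] [CommRing A]
    [Algebra R S] [Algebra R A] {f : σ → A} (hf : Function.Surjective (aeval (R := R) f)) :
    RingHom.ker (aeval fun i ↦ (1 : S) ⊗ₜ[R] f i : MvPolynomial σ S →ₐ[S] S ⊗[R] A) =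
      (RingHom.ker (aeval (R := R) f)).map (map (algebraMap R S)) := by
  set e := algebraTensorAlgEquiv (σ := σ) R S
  have hcomp (p : MvPolynomial σ S) : aeval (fun i ↦ (1 : S) ⊗ₜ[R] f i) p =
      Algebra.TensorProduct.map (AlgHom.id R S) (aeval f) (e.symm p) := by
    induction p using MvPolynomial.induction_on with
    | C a => rw [← algebraMap_eq, AlgEquiv.commutes]; simp
    | add p q hp hq => simp only [map_add, hp, hq]
    | mul_X p i h => simp [h, e]
  have hmap : (e : S ⊗[R] MvPolynomial σ R →+* MvPolynomial σ S).comp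
      (Algebra.TensorProduct.includeRight : MvPolynomial σ R →ₐ[R] S ⊗[R] MvPolynomial σ R) =
        map (algebraMap R S) := by
    ext <;> simp [e]
  rw [← hmap, ← Ideal.map_map, ← AlgHom.coe_ideal_map, ← Algebra.TensorProduct.lTensor_ker _ hf]
  ext p
  rw [RingHom.mem_ker, hcomp, ← RingHom.mem_ker]
  exact ⟨fun h ↦ Ideal.mem_map_of_equiv e p |>.mpr ⟨_, h, e.apply_symm_apply p⟩,
    fun h ↦ by obtain ⟨x, hx, rfl⟩ := (Ideal.mem_map_of_equiv e p).mp h; simpa using hx⟩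

end MvPolynomial

namespace Ideal

variable {σ R : Type*} [CommRing R]

theorem degLE_le (Q : Ideal (MvPolynomial σ R)) (ℓ : ℕ) : Q.degLE ℓ ≤ Q :=
  span_le.mpr fun _ hq ↦ hq.1

theorem exists_degLE_eq_of_fg {Q : Ideal (MvPolynomial σ R)} (hQ : Q.FG) :
    ∃ ℓ, 1 ≤ ℓ ∧ Q.degLE ℓ = Q := by
  obtain ⟨t, rfl⟩ := hQ
  refine ⟨max 1 (t.sup totalDegree), le_max_left _ _, (degLE_le _ _).antisymm ?_⟩
  exact span_le.mpr fun q hq ↦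
    subset_span ⟨subset_span hq, (t.le_sup hq).trans (le_max_right _ _)⟩

theorem map_degLE_le {S : Type*} [CommRing S] (ψ : R →+* S) (Q : Ideal (MvPolynomial σ R))
    (ℓ : ℕ) : (Q.degLE ℓ).map (MvPolynomial.map ψ) ≤ (Q.map (MvPolynomial.map ψ)).degLE ℓ := by
  rw [degLE, map_span, span_le]
  rintro - ⟨q, ⟨hqQ, hqd⟩, rfl⟩
  exact subset_span ⟨mem_map_of_mem _ hqQ, (totalDegree_map_le ψ q).trans hqd⟩

end Ideal

theorem relTypeKer_map_le {σ R S : Type*} [CommRing R] [CommRing S] (ψ : R →+* S)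
    {Q : Ideal (MvPolynomial σ R)} (hQ : Q.FG) :
    relTypeKer (Q.map (MvPolynomial.map ψ)) ≤ relTypeKer Q := by
  obtain ⟨h1, hQℓ⟩ : 1 ≤ relTypeKer Q ∧ Q.degLE (relTypeKer Q) = Q :=
    Nat.sInf_mem (Ideal.exists_degLE_eq_of_fg hQ)
  refine Nat.sInf_le ⟨h1, (Ideal.degLE_le _ _).antisymm ?_⟩
  calc Q.map (MvPolynomial.map ψ) = (Q.degLE (relTypeKer Q)).map (MvPolynomial.map ψ) := by
        rw [hQℓ]
    _ ≤ _ := Ideal.map_degLE_le ψ Q _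

theorem relType_one_tmul_le {σ R S A : Type*} [CommRing R] [IsNoetherianRing R] [CommRing S]
    [CommRing A] [Algebra R S] [Algebra R A] [Finite σ] {f : σ → A}
    (hf : Function.Surjective (aeval (R := R) f)) :
    relType S (fun i ↦ (1 : S) ⊗ₜ[R] f i) ≤ relType R f := by
  rw [relType, relType, MvPolynomial.ker_aeval_one_tmul hf]
  exact relTypeKer_map_le _ (IsNoetherian.noetherian _)

theorem relation_type_statement_3_general
    {R A S : Type*} [CommRing R] [IsNoetherianRing R] [CommRing A] [Algebra R A]
    [CommRing S] [Algebra R S]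
    (𝒜 : ℕ → Submodule R A) [GradedAlgebra 𝒜]
    (h0 : 𝒜 0 = (1 : Submodule R A))
    (hstd : ∀ n : ℕ, 𝒜 (n + 1) = 𝒜 1 * 𝒜 n)
    {m : ℕ} (f : Fin m → A) (hf : Submodule.span R (Set.range f) = 𝒜 1) :
    (∃ ℬ : ℕ → Submodule S (S ⊗[R] A), ∃ _ : GradedAlgebra ℬ,
        ℬ 0 = (1 : Submodule S (S ⊗[R] A)) ∧ (ℬ 1).FG ∧
        (∀ n : ℕ, ℬ (n + 1) = ℬ 1 * ℬ n) ∧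
        Submodule.span S (Set.range fun i : Fin m => ((1 : S) ⊗ₜ[R] f i : S ⊗[R] A)) = ℬ 1)
    ∧ relType S (fun i : Fin m => ((1 : S) ⊗ₜ[R] f i : S ⊗[R] A)) ≤ relType R f := by
  have h𝒜 : IsStandardGraded 𝒜 := ⟨h0, hstd⟩
  have hspan : Submodule.span S (Set.range fun i ↦ (1 : S) ⊗ₜ[R] f i) = (𝒜 1).baseChange S := by
    rw [← hf, Submodule.baseChange_span, ← Set.range_comp]
    rfl
  refine ⟨⟨fun n ↦ (𝒜 n).baseChange S, inferInstance, h𝒜.baseChange.zero_eq, ?_,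
    h𝒜.baseChange.succ_eq, hspan⟩, relType_one_tmul_le (h𝒜.aeval_surjective hf)⟩
  show ((𝒜 1).baseChange S).FG
  exact hspan ▸ Submodule.fg_span (Set.finite_range _)

/-- Let `R` be a commutative Noetherian ring, `A` a standard graded
`R`-algebra, and `R → S` a surjective ring homomorphism.  Then `A ⊗_R S` is a standard
graded `S`-algebra (with degree-one generators the images `f_i ⊗ 1` of the degree-one
generators `f_i` of `A`) and `rt_S(A ⊗_R S) ≤ rt_R(A)`. -/
theorem relation_type_statement_3
    {R A S : Type*} [CommRing R] [IsNoetherianRing R] [CommRing A] [Algebra R A]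
    [CommRing S] [Algebra R S] (hsurj : Function.Surjective (algebraMap R S))
    (𝒜 : ℕ → Submodule R A) [GradedAlgebra 𝒜]
    (h0 : 𝒜 0 = (1 : Submodule R A)) (hfg : (𝒜 1).FG)
    (hstd : ∀ n : ℕ, 𝒜 (n + 1) = 𝒜 1 * 𝒜 n)
    {m : ℕ} (f : Fin m → A) (hf : Submodule.span R (Set.range f) = 𝒜 1) :
    (∃ ℬ : ℕ → Submodule S (S ⊗[R] A), ∃ _ : GradedAlgebra ℬ,
        ℬ 0 = (1 : Submodule S (S ⊗[R] A)) ∧ (ℬ 1).FG ∧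
        (∀ n : ℕ, ℬ (n + 1) = ℬ 1 * ℬ n) ∧
        Submodule.span S (Set.range fun i : Fin m => ((1 : S) ⊗ₜ[R] f i : S ⊗[R] A)) = ℬ 1)
    ∧ relType S (fun i : Fin m => ((1 : S) ⊗ₜ[R] f i : S ⊗[R] A)) ≤ relType R f :=
  relation_type_statement_3_general 𝒜 h0 hstd f hf
end

section
/- Let S = R[x_1,…,x_n] be a polynomial ring over a commutative Noetherian ring R, let d ≥ 1, and let A = R[Mon^d(S)] be the standard graded R-algebra generated by all N = binom(d+n−1, n−1) monomials of degree d in S, placed in degree 1. Then the kernel Q of the polynomial presentation R[T_1,…,T_N] → A (sending T_i to the i-th degree-d monomial in lexicographic order) equals the ideal I_2(M) of 2×2 minors of the n × binom(d+n−2, n−1) matrix M whose (i,j)-entry is the variable T_k with φ(T_k) = x_i m_j, where m_1,…,m_r are the degree-(d−1) monomials in lexicographic order; in particular rt_R(A) = 2 (for data where Q ≠ 0, e.g. n ≥ 2 and d ≥ 2). -/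
open MvPolynomial

/-- Index type for the monomials of degree `d` in `n` variables: the set `Mon^d(S)`.
(Its cardinality is `binom (d+n-1) (n-1)`.) -/
def MonIdx (n d : ℕ) : Type :=
  {v : Fin n →₀ ℕ // (v.sum fun _ e => e) = d}

/-- The family of all monomials of degree `d` in `S = R[x_1,…,x_n]`, generating the
Veronese algebra `A = R[Mon^d(S)]`. -/
noncomputable def monGen (R : Type*) [CommRing R] (n d : ℕ) :
    MonIdx n d → MvPolynomial (Fin n) R :=
  fun v => MvPolynomial.monomial v.1 (1 : R)

/-- The `n × binom (d+n-2) (n-1)` matrix `M` whose `(i,j)` entry is the variable `T_k`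
corresponding to the degree-`d` monomial `x_i · m_j`, where `m_j` runs over the
monomials of degree `d - 1`. -/
noncomputable def monMatrix (R : Type*) [CommRing R] (n d : ℕ) (hd : 1 ≤ d) :
    Matrix (Fin n) (MonIdx n (d - 1)) (MvPolynomial (MonIdx n d) R) :=
  fun i w => MvPolynomial.X ⟨w.1 + Finsupp.single i 1, by
    have h1 : ((w.1 + Finsupp.single i 1).sum fun _ e => e)
        = (w.1.sum fun _ e => e) + ((Finsupp.single i 1).sum fun _ e => e) :=
      Finsupp.sum_add_index' (fun _ => rfl) (fun _ _ _ => rfl)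
    rw [h1, w.2, Finsupp.sum_single_index rfl]
    omega⟩

/-- The ideal `I_2(M)` of `2 × 2` minors of a matrix `M`. -/
def minors2 {α β S : Type*} [CommRing S] (M : Matrix α β S) : Ideal S :=
  Ideal.span {p | ∃ i k j l, p = M i j * M k l - M i l * M k j}

/-!
The kernel of a monomial map `T_v ↦ x^v` is spanned by the binomials `T^u - T^u'` whose
images coincide. Modulo the `2 × 2` minors of `M`, a product `T_a T_b` may be replaced by
`T_{a'} T_{b'}`, where a variable `x_k` of `a` has been traded for a variable `x_i` of `b`.
Repeating such exchanges brings any prescribed factor `T_v` with `x^v ∣ φ(T^u)` into `T^u`,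
and induction on the degree puts every binomial of the kernel into `I_2(M)`. The minors are
quadrics and no nonzero polynomial of degree `≤ 1` lies in the kernel, so the relation type
is `2` once some minor is nonzero, which happens for `n, d ≥ 2`.
-/

namespace Finsupp

variable {σ τ : Type*}

theorem exists_eq_single_one_add {u : σ →₀ ℕ} {a : σ} (ha : u a ≠ 0) :
    ∃ r, u = single a 1 + r :=
  exists_add_of_le (single_le_iff.mpr (Nat.one_le_iff_ne_zero.mpr ha))

theorem exists_apply_ne_zero_of_linearCombination_apply_ne_zero {e : σ → τ →₀ ℕ}
    {u : σ →₀ ℕ} {i : τ} (h : linearCombination ℕ e u i ≠ 0) :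
    ∃ b, u b ≠ 0 ∧ e b i ≠ 0 := by
  by_contra! hc
  refine h ?_
  rw [linearCombination_apply, sum_apply]
  exact Finset.sum_eq_zero fun b hb => by
    simp only [smul_apply, hc b (mem_support_iff.mp hb), smul_zero]

end Finsupp

namespace MvPolynomial

variable {σ τ R : Type*} [CommRing R]

theorem totalDegree_X_mul_X_sub_X_mul_X_le (a b c c' : σ) :
    (X a * X b - X c * X c' : MvPolynomial σ R).totalDegree ≤ 2 := by
  have h : ∀ x y : σ, (X x * X y : MvPolynomial σ R).totalDegree ≤ 2 := fun x y => by
    rw [X, X, monomial_mul]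
    refine (totalDegree_monomial_le _ _).trans ?_
    rw [Finsupp.sum_add_index' (fun _ => rfl) (fun _ _ _ => rfl)]
    simp
  exact (totalDegree_sub _ _).trans (max_le (h a b) (h c c'))

theorem X_mul_X_ne_X_mul_X [Nontrivial R] {a b c c' : σ} (hc : a ≠ c) (hc' : a ≠ c') :
    (X a * X b : MvPolynomial σ R) ≠ X c * X c' := by
  rw [X, X, X, X, monomial_mul, monomial_mul, one_mul, Ne, monomial_left_inj one_ne_zero]
  intro h
  have := DFunLike.congr_fun h a
  simp [hc, hc'] at this

section MonomialMap

variable (e : σ → τ →₀ ℕ)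

local notation "expMap" => Finsupp.linearCombination ℕ e

theorem aeval_monomial_monomial (u : σ →₀ ℕ) (c : R) :
    aeval (fun i => monomial (e i) (1 : R)) (monomial u c) = monomial (expMap u) c := by
  rw [aeval_monomial, Finsupp.linearCombination_apply, monomial_finsupp_sum_index,
    algebraMap_eq]
  simp only [monomial_pow, one_pow]

theorem monomial_sub_monomial_mem_ker_aeval {u u' : σ →₀ ℕ} (h : expMap u = expMap u')
    (c : R) :
    monomial u c - monomial u' c ∈ RingHom.ker (aeval fun i => monomial (e i) (1 : R)) := by
  rw [RingHom.mem_ker, map_sub, aeval_monomial_monomial, aeval_monomial_monomial, h, sub_self]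

theorem coeff_aeval_monomial_family [DecidableEq τ] (p : MvPolynomial σ R) (t : τ →₀ ℕ) :
    coeff t (aeval (fun i => monomial (e i) (1 : R)) p)
      = ∑ u ∈ p.support with expMap u = t, coeff u p := by
  conv_lhs => rw [p.as_sum, map_sum]
  simp only [aeval_monomial_monomial, coeff_sum, coeff_monomial, Finset.sum_filter]

theorem eq_zero_of_aeval_monomial_family_eq_zero {p : MvPolynomial σ R}
    (hinj : Set.InjOn expMap p.support) (hp : aeval (fun i => monomial (e i) (1 : R)) p = 0) :
    p = 0 := by
  classical
  ext u
  by_cases hu : u ∈ p.support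
  · have hfiber : {u' ∈ p.support | expMap u' = expMap u} = {u} := by
      ext u'
      simp only [Finset.mem_filter, Finset.mem_singleton]
      exact ⟨fun h => hinj h.1 hu h.2, by rintro rfl; exact ⟨hu, rfl⟩⟩
    have h := coeff_aeval_monomial_family e p (expMap u)
    rwa [hfiber, Finset.sum_singleton, hp, coeff_zero, eq_comm] at h
  · exact notMem_support_iff.mp hu

theorem ker_aeval_monomial_family_le {I : Ideal (MvPolynomial σ R)}
    (hI : ∀ u u', expMap u = expMap u' → monomial u 1 - monomial u' 1 ∈ I) :
    RingHom.ker (aeval fun i => monomial (e i) (1 : R)) ≤ I := by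
  classical
  intro p hp
  -- `s` picks one exponent in each fibre of `expMap`; `p` is congruent modulo binomials to
  -- a polynomial supported on these representatives, on which `expMap` is injective.
  set s := Function.invFun expMap
  have hs : ∀ u, expMap (s (expMap u)) = expMap u := fun u => Function.invFun_eq ⟨u, rfl⟩
  set r := ∑ u ∈ p.support, monomial (s (expMap u)) (coeff u p)
  have hpr : p - r
      = ∑ u ∈ p.support, C (coeff u p) * (monomial u 1 - monomial (s (expMap u)) 1) := by
    conv_lhs => rw [p.as_sum]
    rw [← Finset.sum_sub_distrib]
    simp only [mul_sub, C_mul_monomial, mul_one]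
  have hprI : p - r ∈ I :=
    hpr ▸ Ideal.sum_mem _ fun u _ => Ideal.mul_mem_left _ _ (hI _ _ (hs u).symm)
  have hprK : p - r ∈ RingHom.ker (aeval fun i => monomial (e i) (1 : R)) :=
    hpr ▸ Ideal.sum_mem _ fun u _ =>
      Ideal.mul_mem_left _ _ (monomial_sub_monomial_mem_ker_aeval e (hs u).symm 1)
  have hr : r = 0 := by
    refine eq_zero_of_aeval_monomial_family_eq_zero e ?_ ?_
    · have hsupp : ∀ u ∈ r.support, ∃ v, u = s (expMap v) := fun u hu => by
        obtain ⟨v, -, hv⟩ := Finset.mem_biUnion.mp (support_sum hu)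
        exact ⟨v, Finset.mem_singleton.mp (support_monomial_subset hv)⟩
      intro u hu u' hu' h
      obtain ⟨v, rfl⟩ := hsupp u hu
      obtain ⟨v', rfl⟩ := hsupp u' hu'
      rw [hs, hs] at h
      rw [h]
    · simpa using RingHom.mem_ker.mp (Ideal.sub_mem _ hp hprK)
  simpa [hr] using hprI

end MonomialMap

end MvPolynomial

section RelationType

variable {σ R : Type*} [CommRing R] {Q : Ideal (MvPolynomial σ R)}

theorem Ideal.degLE_eq_self_of_eq_span {s : Set (MvPolynomial σ R)} {ℓ : ℕ}
    (hQ : Q = Ideal.span s) (hs : ∀ p ∈ s, p.totalDegree ≤ ℓ) : Q.degLE ℓ = Q := by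
  refine le_antisymm (Ideal.span_le.mpr fun q hq => hq.1) ?_
  rw [hQ, Ideal.span_le]
  exact fun p hp => Ideal.subset_span ⟨hQ ▸ Ideal.subset_span hp, hs p hp⟩

theorem Ideal.degLE_eq_bot {ℓ : ℕ} (hQ : ∀ q ∈ Q, q.totalDegree ≤ ℓ → q = 0) :
    Q.degLE ℓ = ⊥ :=
  eq_bot_iff.mpr <| Ideal.span_le.mpr fun q hq => Ideal.mem_bot.mpr (hQ q hq.1 hq.2)

theorem relTypeKer_eq_two (h2 : Q.degLE 2 = Q) (h1 : Q.degLE 1 ≠ Q) : relTypeKer Q = 2 := by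
  refine le_antisymm (Nat.sInf_le ⟨one_le_two, h2⟩) (le_csInf ⟨2, one_le_two, h2⟩ ?_)
  rintro ℓ ⟨hℓ, hQ⟩
  obtain rfl | hℓ := hℓ.eq_or_lt
  · exact absurd hQ h1
  · exact hℓ

end RelationType

namespace MonIdx

variable {n d : ℕ}

theorem degree_val (v : MonIdx n d) : v.1.degree = d := v.2

theorem eq_of_val_le {v a : MonIdx n d} (h : v.1 ≤ a.1) : v = a := by
  obtain ⟨c, hc⟩ := exists_add_of_le h
  have hdeg := congrArg Finsupp.degree hc
  rw [map_add, degree_val, degree_val, left_eq_add, Finsupp.degree_eq_zero_iff] at hdeg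
  exact Subtype.ext (by rw [hc, hdeg, add_zero])

noncomputable def mulVar (hd : 1 ≤ d) (w : MonIdx n (d - 1)) (i : Fin n) : MonIdx n d :=
  ⟨w.1 + Finsupp.single i 1, by
    change (w.1 + Finsupp.single i 1).degree = d
    rw [map_add, Finsupp.degree_single, degree_val]
    omega⟩

theorem exists_mulVar_eq (hd : 1 ≤ d) {a : MonIdx n d} {k : Fin n} (hk : a.1 k ≠ 0) :
    ∃ w, mulVar hd w k = a := by
  have hle : Finsupp.single k 1 ≤ a.1 := Finsupp.single_le_iff.mpr (Nat.one_le_iff_ne_zero.mpr hk)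
  refine ⟨⟨a.1 - Finsupp.single k 1, ?_⟩, Subtype.ext (tsub_add_cancel_of_le hle)⟩
  change (a.1 - Finsupp.single k 1).degree = d - 1
  have h := congrArg Finsupp.degree (tsub_add_cancel_of_le hle)
  rw [map_add, Finsupp.degree_single, degree_val] at h
  omega

end MonIdx

namespace Veronese

open MonIdx

variable {R : Type*} [CommRing R] {n d : ℕ}

/-- The presentation map sends `T^u` to `x^(monExp u)`. -/
noncomputable abbrev monExp : (MonIdx n d →₀ ℕ) →ₗ[ℕ] (Fin n →₀ ℕ) :=
  Finsupp.linearCombination ℕ fun v => v.1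

theorem monExp_single_one (v : MonIdx n d) : monExp (Finsupp.single v 1) = v.1 := by
  rw [Finsupp.linearCombination_single, one_smul]

theorem degree_monExp (u : MonIdx n d →₀ ℕ) : (monExp u).degree = d * u.degree := by
  induction u using Finsupp.induction_linear with
  | zero => simp
  | add u u' hu hu' => rw [map_add, map_add, map_add, hu, hu', mul_add]
  | single v c =>
    rw [Finsupp.linearCombination_single, map_nsmul, degree_val, Finsupp.degree_single,
      smul_eq_mul, mul_comm]

theorem injOn_monExp (hd : 1 ≤ d) :
    Set.InjOn (monExp : (MonIdx n d →₀ ℕ) → _) {u | u.degree ≤ 1} := by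
  intro u hu u' _ h
  have hdeg : u.degree = u'.degree :=
    Nat.eq_of_mul_eq_mul_left hd (by rw [← degree_monExp, ← degree_monExp, h])
  obtain hu0 | hu1 := Nat.le_one_iff_eq_zero_or_eq_one.mp hu
  · rw [(Finsupp.degree_eq_zero_iff u).mp hu0, (Finsupp.degree_eq_zero_iff u').mp (hdeg ▸ hu0)]
  · obtain ⟨a, rfl⟩ : u ∈ Set.range fun a => Finsupp.single a 1 := by
      rw [Finsupp.range_single_one]; exact hu1
    obtain ⟨a', rfl⟩ : u' ∈ Set.range fun a => Finsupp.single a 1 := by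
      rw [Finsupp.range_single_one]; exact hdeg.symm.trans hu1
    rw [monExp_single_one, monExp_single_one] at h
    rw [Subtype.ext h]

theorem monMatrix_apply (hd : 1 ≤ d) (i : Fin n) (w : MonIdx n (d - 1)) :
    monMatrix R n d hd i w = X (mulVar hd w i) := rfl

theorem minors2_le_ker (hd : 1 ≤ d) :
    minors2 (monMatrix R n d hd) ≤ RingHom.ker (aeval (monGen R n d)) := by
  refine Ideal.span_le.mpr ?_
  rintro _ ⟨i, k, j, l, rfl⟩
  rw [SetLike.mem_coe, RingHom.mem_ker, map_sub, map_mul, map_mul, monMatrix_apply,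
    monMatrix_apply, monMatrix_apply, monMatrix_apply, aeval_X, aeval_X, aeval_X, aeval_X]
  simp only [monGen, mulVar, monomial_mul]
  rw [sub_eq_zero, add_add_add_comm, add_add_add_comm l.1, add_comm l.1]

variable (R) in
noncomputable def monClass (hd : 1 ≤ d) (u : MonIdx n d →₀ ℕ) :
    MvPolynomial (MonIdx n d) R ⧸ minors2 (monMatrix R n d hd) :=
  Ideal.Quotient.mk _ (monomial u 1)

variable (hd : 1 ≤ d)

theorem monClass_add (u u' : MonIdx n d →₀ ℕ) :
    monClass R hd (u + u') = monClass R hd u * monClass R hd u' := by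
  rw [monClass, monClass, monClass, ← map_mul, monomial_mul, one_mul]

theorem monClass_eq_iff {u u' : MonIdx n d →₀ ℕ} :
    monClass R hd u = monClass R hd u' ↔
      monomial u 1 - monomial u' 1 ∈ minors2 (monMatrix R n d hd) :=
  Ideal.Quotient.eq

theorem monClass_exchange (w w' : MonIdx n (d - 1)) (i k : Fin n) :
    monClass R hd (Finsupp.single (mulVar hd w k) 1 + Finsupp.single (mulVar hd w' i) 1)
      = monClass R hd (Finsupp.single (mulVar hd w i) 1 + Finsupp.single (mulVar hd w' k) 1) := by
  refine (monClass_eq_iff hd).mpr ?_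
  have h : monMatrix R n d hd k w * monMatrix R n d hd i w'
      - monMatrix R n d hd k w' * monMatrix R n d hd i w ∈ minors2 (monMatrix R n d hd) :=
    Ideal.subset_span ⟨k, i, w, w', rfl⟩
  simp only [monMatrix_apply, X, monomial_mul, one_mul] at h
  rwa [add_comm (Finsupp.single (mulVar hd w' k) 1)] at h

theorem exists_exchange_toward {v a b : MonIdx n d} {i k : Fin n} (hi : a.1 i < v.1 i)
    (hk : v.1 k < a.1 k) (hb : b.1 i ≠ 0) :
    ∃ a' b' : MonIdx n d, (v.1 - a'.1).degree + 1 = (v.1 - a.1).degree ∧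
      a'.1 + b'.1 = a.1 + b.1 ∧
      monClass R hd (Finsupp.single a 1 + Finsupp.single b 1)
        = monClass R hd (Finsupp.single a' 1 + Finsupp.single b' 1) := by
  have hik : i ≠ k := by rintro rfl; omega
  obtain ⟨w, rfl⟩ := exists_mulVar_eq hd (a := a) (k := k) (by omega)
  obtain ⟨w', rfl⟩ := exists_mulVar_eq hd hb
  refine ⟨mulVar hd w i, mulVar hd w' k, ?_, ?_, monClass_exchange hd w w' i k⟩
  · have h : (v.1 - (mulVar hd w i).1) + Finsupp.single i 1 = v.1 - (mulVar hd w k).1 := by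
      ext j
      simp only [mulVar, Finsupp.add_apply, Finsupp.tsub_apply, Finsupp.single_apply,
        hik.symm, ↓reduceIte] at hi hk ⊢
      split_ifs <;> subst_vars <;> omega
    rw [← h, map_add, Finsupp.degree_single]
  · simp only [mulVar]
    ac_rfl

theorem exists_monClass_eq_single_add {v a : MonIdx n d} {u : MonIdx n d →₀ ℕ}
    (ha : u a ≠ 0) (hv : v.1 ≤ monExp u) :
    ∃ u', monExp u = v.1 + monExp u' ∧
      monClass R hd u = monClass R hd (Finsupp.single v 1 + u') := by
  induction hδ : (v.1 - a.1).degree generalizing a u with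
  | zero =>
    obtain rfl : v = a :=
      eq_of_val_le (tsub_eq_zero_iff_le.mp ((Finsupp.degree_eq_zero_iff _).mp hδ))
    obtain ⟨u', rfl⟩ := Finsupp.exists_eq_single_one_add ha
    exact ⟨u', by rw [map_add, monExp_single_one], rfl⟩
  | succ δ ih =>
    obtain ⟨i, hi⟩ : ∃ i, a.1 i < v.1 i := by
      by_contra! h
      rw [tsub_eq_zero_of_le (Finsupp.le_def.mpr h), map_zero] at hδ
      omega
    obtain ⟨k, hk⟩ : ∃ k, v.1 k < a.1 k := by
      by_contra! h
      exact hi.ne (by rw [eq_of_val_le (Finsupp.le_def.mpr h)])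
    obtain ⟨u₁, rfl⟩ := Finsupp.exists_eq_single_one_add ha
    have hwt : monExp u₁ i ≠ 0 := by
      have := hv i
      rw [map_add, monExp_single_one, Finsupp.add_apply] at this
      omega
    obtain ⟨b, hb, hbi⟩ := Finsupp.exists_apply_ne_zero_of_linearCombination_apply_ne_zero hwt
    obtain ⟨r, rfl⟩ := Finsupp.exists_eq_single_one_add hb
    obtain ⟨a', b', hδ', hab, hcls⟩ := exists_exchange_toward (R := R) hd hi hk hbi
    have hwt' : monExp (Finsupp.single a' 1 + Finsupp.single b' 1 + r)
        = monExp (Finsupp.single a 1 + (Finsupp.single b 1 + r)) := by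
      simp only [map_add, monExp_single_one]
      rw [← add_assoc, hab]
    obtain ⟨u', hu', hcls'⟩ := ih (a := a') (u := Finsupp.single a' 1 + Finsupp.single b' 1 + r)
      (by simp) (hwt' ▸ hv) (by omega)
    refine ⟨u', hwt' ▸ hu', ?_⟩
    rw [← add_assoc, monClass_add, hcls, ← monClass_add, hcls']

theorem monClass_eq_of_monExp_eq {u u' : MonIdx n d →₀ ℕ} (h : monExp u = monExp u') :
    monClass R hd u = monClass R hd u' := by
  induction hm : u.degree generalizing u u' with
  | zero =>
    have hdeg := degree_monExp u'
    rw [← h, degree_monExp, hm, mul_zero, eq_comm, mul_eq_zero] at hdeg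
    rw [(Finsupp.degree_eq_zero_iff u).mp hm,
      (Finsupp.degree_eq_zero_iff u').mp (hdeg.resolve_left (by omega))]
  | succ m ih =>
    obtain ⟨v, hv⟩ := Finsupp.ne_iff.mp (show u ≠ 0 by rintro rfl; simp at hm)
    obtain ⟨um, rfl⟩ := Finsupp.exists_eq_single_one_add hv
    have hu' : u' ≠ 0 := by
      rintro rfl
      have hdeg := degree_monExp (Finsupp.single v 1 + um)
      rw [h, map_zero, map_zero, hm, eq_comm, mul_eq_zero] at hdeg
      omega
    obtain ⟨a, ha⟩ := Finsupp.ne_iff.mp hu'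
    rw [map_add, monExp_single_one] at h
    obtain ⟨u'', hwt, hcls⟩ :=
      exists_monClass_eq_single_add (R := R) hd (v := v) ha (h ▸ le_self_add)
    rw [hcls, monClass_add, monClass_add, ih (add_left_cancel (h.trans hwt))]
    rw [map_add, Finsupp.degree_single] at hm
    omega

theorem ker_monGen_eq_minors2 :
    RingHom.ker (aeval (monGen R n d)) = minors2 (monMatrix R n d hd) :=
  le_antisymm
    (ker_aeval_monomial_family_le _ fun _ _ h =>
      (monClass_eq_iff hd).mp (monClass_eq_of_monExp_eq hd h))
    (minors2_le_ker hd)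

theorem minors2_ne_bot [Nontrivial R] (hn : 2 ≤ n) (h2d : 2 ≤ d) :
    minors2 (monMatrix R n d hd) ≠ ⊥ := by
  set i₀ : Fin n := ⟨0, by omega⟩
  set i₁ : Fin n := ⟨1, by omega⟩
  have hi : i₀ ≠ i₁ := Fin.ne_of_val_ne zero_ne_one
  let w : MonIdx n (d - 1) := ⟨Finsupp.single i₀ (d - 1), Finsupp.degree_single _ _⟩
  let w' : MonIdx n (d - 1) := ⟨Finsupp.single i₁ (d - 1), Finsupp.degree_single _ _⟩
  have hne : ∀ {a b : MonIdx n d}, a.1 i₁ ≠ b.1 i₁ → a ≠ b :=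
    fun h hab => h (hab ▸ rfl)
  intro hbot
  have hmem : monMatrix R n d hd i₀ w * monMatrix R n d hd i₁ w'
      - monMatrix R n d hd i₀ w' * monMatrix R n d hd i₁ w ∈ minors2 (monMatrix R n d hd) :=
    Ideal.subset_span ⟨i₀, i₁, w, w', rfl⟩
  rw [hbot, Ideal.mem_bot, sub_eq_zero] at hmem
  -- `T_{x₀^d} T_{x₁^d} ≠ T_{x₀x₁^(d-1)} T_{x₀^(d-1)x₁}`: the `x₁`-exponents of `x₀^d` differ
  refine X_mul_X_ne_X_mul_X (hne ?_) (hne ?_) hmem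
  · simp [w, w', hi]
    omega
  · simp [w, hi]

theorem relType_monGen_eq_two [Nontrivial R] (hn : 2 ≤ n) (h2d : 2 ≤ d) :
    relType R (monGen R n d) = 2 := by
  have hd : 1 ≤ d := by omega
  have hQ := ker_monGen_eq_minors2 (R := R) (n := n) hd
  refine relTypeKer_eq_two (Ideal.degLE_eq_self_of_eq_span hQ ?_) ?_
  · rintro _ ⟨i, k, j, l, rfl⟩
    simp only [monMatrix_apply]
    exact totalDegree_X_mul_X_sub_X_mul_X_le _ _ _ _
  · rw [Ideal.degLE_eq_bot fun q hq hdeg => eq_zero_of_aeval_monomial_family_eq_zero _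
      ((injOn_monExp hd).mono fun u hu => (le_totalDegree hu).trans hdeg) hq, hQ]
    exact (minors2_ne_bot hd hn h2d).symm

end Veronese

theorem relation_type_statement_8_general
    {R : Type*} [CommRing R] [Nontrivial R]
    (n d : ℕ) (hd : 1 ≤ d) :
    RingHom.ker
        (MvPolynomial.aeval (monGen R n d) :
          MvPolynomial (MonIdx n d) R →ₐ[R] MvPolynomial (Fin n) R)
      = minors2 (monMatrix R n d hd)
    ∧ (2 ≤ n → 2 ≤ d → relType R (monGen R n d) = 2) :=
  ⟨Veronese.ker_monGen_eq_minors2 hd, fun hn h2d => Veronese.relType_monGen_eq_two hn h2d⟩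

/-- Let `S = R[x_1,…,x_n]` be a polynomial ring over a commutative
Noetherian ring `R`, let `d ≥ 1`, and let `A = R[Mon^d(S)]` be the standard graded
`R`-algebra generated (in degree one) by all monomials of degree `d` in `S`.  Then the
kernel `Q` of the polynomial presentation sending the variable indexed by a degree-`d`
monomial to that monomial equals the ideal `I_2(M)` of `2 × 2` minors of the matrix `M`
whose `(i,j)` entry is the variable corresponding to `x_i · m_j` (`m_j` the degree-`(d-1)`
monomials); in particular `rt_R(A) = 2` when `n ≥ 2` and `d ≥ 2`. -/
theorem relation_type_statement_8
    {R : Type*} [CommRing R] [IsNoetherianRing R] [Nontrivial R]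
    (n d : ℕ) (hd : 1 ≤ d) :
    RingHom.ker
        (MvPolynomial.aeval (monGen R n d) :
          MvPolynomial (MonIdx n d) R →ₐ[R] MvPolynomial (Fin n) R)
      = minors2 (monMatrix R n d hd)
    ∧ (2 ≤ n → 2 ≤ d → relType R (monGen R n d) = 2) :=
  relation_type_statement_8_general n d hd
end
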